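/- arXiv:2102.09347 — 4 statements merged into one kernel-verified Lean document; each statement's English description precedes it below -/
import Mathlib

section
/- If f₁ and f₂ are typical hesitant fuzzy languages computed by nondeterministic typical hesitant fuzzy automata, then their ℍ-union f₁ ⊎ f₂, defined pointwise by (f₁ ⊎ f₂)(w) = f₁(w) ⊔ f₂(w), is also computed by some nondeterministic typical hesitant fuzzy automaton. -/
/-!
The union automaton has the disjoint union of the two state sets plus a fresh initial state, whose
outgoing transitions are those of the two old initial states and whose final value is
`F₁ q₀₁ ⊔ F₂ q₀₂`. In `ℍ` the operation `⊗` does not distribute over `⊔`, so a run cannot simply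
be split into the two automata; instead, every `⊔` that meets a `⊗` has one summand equal to `{0}`,
because the two copies are never connected, and `{0}` is both neutral for `⊔` and absorbing for `⊗`.
-/


open unitInterval

/-- ℍ: the set of all finite nonempty subsets of [0,1], modeled as
nonempty finsets of the unit interval. -/
abbrev TH := {X : Finset I // X.Nonempty}

/-- inf-combination: X ⊗ Y = {min x y | x ∈ X, y ∈ Y} -/
noncomputable def hinf (X Y : TH) : TH :=
  ⟨Finset.image₂ min X.1 Y.1, X.2.image₂ Y.2⟩

/-- sup-combination: X ⊔ Y = {max x y | x ∈ X, y ∈ Y} -/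
noncomputable def hsup (X Y : TH) : TH :=
  ⟨Finset.image₂ max X.1 Y.1, X.2.image₂ Y.2⟩

/-- the element {1} -/
noncomputable def hone : TH := ⟨{1}, Finset.singleton_nonempty 1⟩

/-- the element {0} -/
noncomputable def hzero : TH := ⟨{0}, Finset.singleton_nonempty 0⟩

/-- the order X ⊑ Y  iff  X ⊔ Y = Y -/
def hle (X Y : TH) : Prop := hsup X Y = Y

instance : Std.Commutative hsup := ⟨fun X Y => Subtype.ext (by
  simpa [hsup] using Finset.image₂_comm (f := max (α := I)) (g := max)
    (fun a b => max_comm a b))⟩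

instance : Std.Associative hsup := ⟨fun X Y Z => Subtype.ext (by
  simp only [hsup]
  exact Finset.image₂_assoc (f := max (α := I)) (g := max) (f' := max) (g' := max)
    (fun a b c => max_assoc a b c))⟩

/-- Iterated sup-combination ⊔_{b ∈ s} f b (it equals {0} on the empty set). -/
noncomputable def bigHsup {β : Type*} (s : Finset β) (f : β → TH) : TH :=
  s.fold hsup hzero f

/-- The extension ψ̂ of the typical hesitant fuzzy transition relation ψ of an
NTHFA to words: ψ̂(q, λ, q') = {1} if q = q' and {0} otherwise, and
ψ̂ on longer words is obtained by sup-combining over intermediate states. -/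
noncomputable def psihat {Q α : Type} [Fintype Q] [DecidableEq Q]
    (ψ : Q → α → Q → TH) : Q → List α → Q → TH
  | q, [], q' => if q = q' then hone else hzero
  | q, a :: w, q' =>
      bigHsup Finset.univ fun q'' => hinf (ψ q a q'') (psihat ψ q'' w q')

/-- The THFL computed by the NTHFA ⟨Q, α, ψ, q₀, F⟩:
f(w) = ⊔_{q ∈ Q} (ψ̂(q₀, w, q) ⊗ F(q)). -/
noncomputable def nthfaLang {Q α : Type} [Fintype Q] [DecidableEq Q]
    (ψ : Q → α → Q → TH) (q0 : Q) (F : Q → TH) (w : List α) : TH :=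
  bigHsup Finset.univ fun q => hinf (psihat ψ q0 w q) (F q)

/-- f ∈ 𝕋_R : f is computed by some nondeterministic typical hesitant fuzzy automaton. -/
def InTR {α : Type} (f : List α → TH) : Prop :=
  ∃ (Q : Type) (_ : Fintype Q) (_ : DecidableEq Q) (_ : Nonempty Q)
    (ψ : Q → α → Q → TH) (q0 : Q) (F : Q → TH),
    ∀ w, f w = nthfaLang ψ q0 F w

open Function

-- `ℍ` with `⊔` as addition and `{0}` as zero, so that `bigHsup` is definitionally a `Finset.sum`.
noncomputable instance : Zero TH := ⟨hzero⟩

noncomputable instance : Add TH := ⟨hsup⟩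

noncomputable instance : AddCommMonoid TH where
  add_assoc := Std.Associative.assoc (op := hsup)
  zero_add X := Subtype.ext <| Finset.image₂_left_identity (fun x => max_eq_right x.2.1) X.1
  add_zero X := Subtype.ext <| Finset.image₂_right_identity (fun x => max_eq_left x.2.1) X.1
  add_comm := Std.Commutative.comm (op := hsup)
  nsmul := nsmulRec

theorem hinf_hone_left (X : TH) : hinf hone X = X :=
  Subtype.ext <| Finset.image₂_left_identity (fun x => min_eq_right x.2.2) X.1

theorem hinf_zero_left (X : TH) : hinf 0 X = 0 :=
  Subtype.ext <| by
    change Finset.image₂ min {0} X.1 = {0}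
    rw [Finset.image₂_singleton_left]
    exact (Finset.image_congr fun x _ => min_eq_left x.2.1).trans (Finset.image_const X.2 0)

theorem hinf_zero_right (X : TH) : hinf X 0 = 0 :=
  Subtype.ext <| by
    change Finset.image₂ min X.1 {0} = {0}
    rw [Finset.image₂_singleton_right]
    exact (Finset.image_congr fun x _ => min_eq_right x.2.1).trans (Finset.image_const X.2 0)

theorem hinf_add_left_of_eq_zero_or {X Y : TH} (h : X = 0 ∨ Y = 0) (Z : TH) :
    hinf (X + Y) Z = hinf X Z + hinf Y Z := by
  rcases h with rfl | rfl <;> simp [hinf_zero_left]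

section ExtendByZero

variable {ι κ : Type*} [Fintype ι] {e : ι → κ}

theorem sum_hinf_extend_left [Fintype κ] (he : Injective e) (c : ι → TH) (v : κ → TH) :
    ∑ k, hinf (extend e c 0 k) (v k) = ∑ i, hinf (c i) (v (e i)) :=
  (Fintype.sum_of_injective e he _ _
    (fun k hk => by rw [extend_apply' _ _ _ hk, Pi.zero_apply, hinf_zero_left])
    (fun i => by rw [he.extend_apply])).symm

theorem sum_hinf_extend_right (he : Injective e) (c : ι → TH) (g : ι → ι → TH) (k : κ) :
    ∑ i, hinf (c i) (extend e (g i) 0 k) = extend e (fun j => ∑ i, hinf (c i) (g i j)) 0 k := by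
  by_cases hk : ∃ j, e j = k
  · obtain ⟨j, rfl⟩ := hk
    simp only [he.extend_apply]
  · simp only [extend_apply' _ _ _ hk, Pi.zero_apply, hinf_zero_right, Finset.sum_const_zero]

theorem extend_eq_zero_or_extend_eq_zero {ι' : Type*} {e' : ι' → κ}
    (hdisj : Disjoint (Set.range e) (Set.range e')) (c : ι → TH) (c' : ι' → TH) (k : κ) :
    extend e c 0 k = 0 ∨ extend e' c' 0 k = 0 := by
  by_cases hk : k ∈ Set.range e
  · exact .inr (extend_apply' _ _ _ (Set.disjoint_left.mp hdisj hk))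
  · exact .inl (extend_apply' _ _ _ hk)

theorem sum_hinf_extend_add_extend [Fintype κ] {ι' : Type*} [Fintype ι'] {e' : ι' → κ}
    (he : Injective e) (he' : Injective e') (hdisj : Disjoint (Set.range e) (Set.range e'))
    (c : ι → TH) (c' : ι' → TH) (v : κ → TH) :
    ∑ k, hinf (extend e c 0 k + extend e' c' 0 k) (v k) =
      ∑ i, hinf (c i) (v (e i)) + ∑ i, hinf (c' i) (v (e' i)) := by
  simp only [hinf_add_left_of_eq_zero_or (extend_eq_zero_or_extend_eq_zero hdisj c c' _),
    Finset.sum_add_distrib, sum_hinf_extend_left he, sum_hinf_extend_left he']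

end ExtendByZero

section Automata

variable {α Q : Type} [Fintype Q] [DecidableEq Q]

theorem psihat_cons (ψ : Q → α → Q → TH) (q : Q) (a : α) (w : List α) (q' : Q) :
    psihat ψ q (a :: w) q' = ∑ q'', hinf (ψ q a q'') (psihat ψ q'' w q') :=
  rfl

theorem nthfaLang_eq_sum (ψ : Q → α → Q → TH) (q0 : Q) (F : Q → TH) (w : List α) :
    nthfaLang ψ q0 F w = ∑ q, hinf (psihat ψ q0 w q) (F q) :=
  rfl

theorem nthfaLang_nil (ψ : Q → α → Q → TH) (q0 : Q) (F : Q → TH) :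
    nthfaLang ψ q0 F [] = F q0 := by
  rw [nthfaLang_eq_sum, ← Fintype.sum_ite_eq q0 F]
  refine Finset.sum_congr rfl fun q _ => ?_
  simp only [psihat]
  split_ifs
  · exact hinf_hone_left _
  · exact hinf_zero_left _

theorem psihat_comp_of_extend {Q' : Type} [Fintype Q'] [DecidableEq Q'] {ψ : Q → α → Q → TH}
    {ψ' : Q' → α → Q' → TH} {e : Q' → Q} (he : Injective e)
    (hψ : ∀ p a, ψ (e p) a = extend e (ψ' p a) 0) (w : List α) (p : Q') :
    psihat ψ (e p) w = extend e (psihat ψ' p w) 0 := by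
  induction w generalizing p with
  | nil =>
    funext q
    by_cases hq : ∃ p', e p' = q
    · obtain ⟨p', rfl⟩ := hq
      simp only [psihat, he.extend_apply, he.eq_iff]
    · simp only [psihat, extend_apply' _ _ _ hq, Pi.zero_apply]
      exact if_neg fun h => hq ⟨p, h⟩
  | cons a w ih =>
    funext q
    simp only [psihat_cons, hψ, sum_hinf_extend_left he, ih]
    exact sum_hinf_extend_right he _ _ q

end Automata

section Union

variable {α Q₁ Q₂ : Type}

noncomputable def unionPsi (ψ₁ : Q₁ → α → Q₁ → TH) (ψ₂ : Q₂ → α → Q₂ → TH) (q₀₁ : Q₁)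
    (q₀₂ : Q₂) : Option (Q₁ ⊕ Q₂) → α → Option (Q₁ ⊕ Q₂) → TH
  | some (.inl p), a => extend (some ∘ Sum.inl) (ψ₁ p a) 0
  | some (.inr p), a => extend (some ∘ Sum.inr) (ψ₂ p a) 0
  | none, a => extend (some ∘ Sum.inl) (ψ₁ q₀₁ a) 0 + extend (some ∘ Sum.inr) (ψ₂ q₀₂ a) 0

noncomputable def unionF (F₁ : Q₁ → TH) (F₂ : Q₂ → TH) (q₀₁ : Q₁) (q₀₂ : Q₂) :
    Option (Q₁ ⊕ Q₂) → TH
  | some (.inl p) => F₁ p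
  | some (.inr p) => F₂ p
  | none => F₁ q₀₁ + F₂ q₀₂

theorem injective_some_inl : Injective (some ∘ Sum.inl : Q₁ → Option (Q₁ ⊕ Q₂)) :=
  (Option.some_injective _).comp Sum.inl_injective

theorem injective_some_inr : Injective (some ∘ Sum.inr : Q₂ → Option (Q₁ ⊕ Q₂)) :=
  (Option.some_injective _).comp Sum.inr_injective

theorem disjoint_range_some_inl_some_inr :
    Disjoint (Set.range (some ∘ Sum.inl : Q₁ → Option (Q₁ ⊕ Q₂)))
      (Set.range (some ∘ Sum.inr : Q₂ → Option (Q₁ ⊕ Q₂))) := by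
  simp [Set.disjoint_left]

variable [Fintype Q₁] [DecidableEq Q₁] [Fintype Q₂] [DecidableEq Q₂]
  (ψ₁ : Q₁ → α → Q₁ → TH) (ψ₂ : Q₂ → α → Q₂ → TH) (q₀₁ : Q₁) (q₀₂ : Q₂)

theorem psihat_unionPsi_none_cons (a : α) (w : List α) :
    psihat (unionPsi ψ₁ ψ₂ q₀₁ q₀₂) none (a :: w) =
      extend (some ∘ Sum.inl) (psihat ψ₁ q₀₁ (a :: w)) 0 +
        extend (some ∘ Sum.inr) (psihat ψ₂ q₀₂ (a :: w)) 0 := by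
  funext q
  have sim₁ := psihat_comp_of_extend (ψ := unionPsi ψ₁ ψ₂ q₀₁ q₀₂) (ψ' := ψ₁) injective_some_inl
    (fun _ _ => rfl) w
  have sim₂ := psihat_comp_of_extend (ψ := unionPsi ψ₁ ψ₂ q₀₁ q₀₂) (ψ' := ψ₂) injective_some_inr
    (fun _ _ => rfl) w
  simp only [psihat_cons, unionPsi, Pi.add_apply]
  rw [sum_hinf_extend_add_extend injective_some_inl injective_some_inr
      disjoint_range_some_inl_some_inr]
  simp only [sim₁, sim₂, sum_hinf_extend_right injective_some_inl,
    sum_hinf_extend_right injective_some_inr]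
  rfl

theorem nthfaLang_unionPsi (F₁ : Q₁ → TH) (F₂ : Q₂ → TH) (w : List α) :
    nthfaLang (unionPsi ψ₁ ψ₂ q₀₁ q₀₂) none (unionF F₁ F₂ q₀₁ q₀₂) w =
      nthfaLang ψ₁ q₀₁ F₁ w + nthfaLang ψ₂ q₀₂ F₂ w := by
  cases w with
  | nil => simp only [nthfaLang_nil, unionF]
  | cons a w =>
    simp only [nthfaLang_eq_sum, psihat_unionPsi_none_cons, Pi.add_apply]
    exact sum_hinf_extend_add_extend injective_some_inl injective_some_inr
      disjoint_range_some_inl_some_inr _ _ _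

end Union

/-- The ℍ-union of two THFLs computed by NTHFAs is computed by an NTHFA. -/
theorem stmt13 {α : Type} (f1 f2 : List α → TH)
    (h1 : InTR f1) (h2 : InTR f2) :
    InTR (fun w => hsup (f1 w) (f2 w)) := by
  obtain ⟨Q₁, _, _, _, ψ₁, q₀₁, F₁, hf₁⟩ := h1
  obtain ⟨Q₂, _, _, _, ψ₂, q₀₂, F₂, hf₂⟩ := h2
  refine ⟨Option (Q₁ ⊕ Q₂), inferInstance, inferInstance, ⟨none⟩, unionPsi ψ₁ ψ₂ q₀₁ q₀₂, none,
    unionF F₁ F₂ q₀₁ q₀₂, fun w => ?_⟩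
  show f1 w + f2 w = _
  rw [nthfaLang_unionPsi, hf₁, hf₂]
end

section
/- There exists a typical hesitant fuzzy language f: Σ* → ℍ that is not computed by any nondeterministic typical hesitant fuzzy automaton; in particular, f(w) = ⋃_{i=0}^{|w|} {1/(2^i + 1)} has infinite range and hence f ∉ 𝕋_R. -/
open unitInterval

/-- 1/(2^i + 1) as an element of [0,1]. -/
noncomputable def elt (i : ℕ) : I :=
  ⟨1 / (2 ^ i + 1), by
    constructor
    · positivity
    · rw [div_le_one (by positivity)]
      have : (1 : ℝ) ≤ 2 ^ i := one_le_pow₀ (by norm_num)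
      linarith⟩

/-- The THFL f(w) = ⋃_{i=0}^{|w|} {1/(2^i+1)}. -/
noncomputable def fWitness {α : Type} (w : List α) : TH :=
  ⟨(Finset.range (w.length + 1)).image elt, by
    refine Finset.Nonempty.image ?_ _
    exact Finset.nonempty_range_iff.mpr (Nat.succ_ne_zero _)⟩

/-!
Since `min x y` and `max x y` are always one of `x`, `y`, every membership degree occurring in
`ψ̂(q, w, q')` or in the value of an automaton on `w` is `0`, `1`, or a degree occurring in `F` or
in `ψ` at a letter of `w`. Over a finite set of letters an automaton therefore only ever uses
finitely many degrees, whereas `fWitness` uses the infinitely many distinct degrees `1/(2^i+1)`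
along the words `aⁿ`.
-/

section DegreeBound

variable {E : Finset I}

lemma hinf_subset {X Y : TH} (hX : X.1 ⊆ E) (hY : Y.1 ⊆ E) : (hinf X Y).1 ⊆ E := by
  intro z hz
  obtain ⟨x, hx, y, hy, rfl⟩ := Finset.mem_image₂.mp hz
  rcases min_choice x y with h | h <;> rw [h]
  exacts [hX hx, hY hy]

lemma hsup_subset {X Y : TH} (hX : X.1 ⊆ E) (hY : Y.1 ⊆ E) : (hsup X Y).1 ⊆ E := by
  intro z hz
  obtain ⟨x, hx, y, hy, rfl⟩ := Finset.mem_image₂.mp hz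
  rcases max_choice x y with h | h <;> rw [h]
  exacts [hX hx, hY hy]

lemma bigHsup_subset {β : Type*} {s : Finset β} {f : β → TH} (h0 : 0 ∈ E)
    (hf : ∀ b ∈ s, (f b).1 ⊆ E) : (bigHsup s f).1 ⊆ E := by
  induction s using Finset.cons_induction with
  | empty => simpa [bigHsup, hzero] using h0
  | cons b s hbs ih =>
    rw [bigHsup, Finset.fold_cons]
    exact hsup_subset (hf b (Finset.mem_cons_self _ _))
      (ih fun c hc => hf c (Finset.mem_cons_of_mem hc))

variable {Q α : Type} [Fintype Q] [DecidableEq Q] {ψ : Q → α → Q → TH}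

lemma psihat_subset (h0 : 0 ∈ E) (h1 : 1 ∈ E) {w : List α}
    (hψ : ∀ a ∈ w, ∀ q q', (ψ q a q').1 ⊆ E) (q q' : Q) : (psihat ψ q w q').1 ⊆ E := by
  induction w generalizing q with
  | nil =>
    unfold psihat
    split_ifs
    · simpa [hone] using h1
    · simpa [hzero] using h0
  | cons a w ih =>
    rw [psihat]
    refine bigHsup_subset h0 fun q'' _ => hinf_subset (hψ a List.mem_cons_self q q'') ?_
    exact ih (fun b hb => hψ b (List.mem_cons_of_mem a hb)) q''

lemma nthfaLang_subset (h0 : 0 ∈ E) (h1 : 1 ∈ E) {q0 : Q} {F : Q → TH} {w : List α}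
    (hψ : ∀ a ∈ w, ∀ q q', (ψ q a q').1 ⊆ E) (hF : ∀ q, (F q).1 ⊆ E) :
    (nthfaLang ψ q0 F w).1 ⊆ E :=
  bigHsup_subset h0 fun q _ => hinf_subset (psihat_subset h0 h1 hψ q0 q) (hF q)

end DegreeBound

lemma InTR.exists_finset_subset {α : Type} {f : List α → TH} (hf : InTR f) (s : Finset α) :
    ∃ E : Finset I, ∀ w : List α, (∀ a ∈ w, a ∈ s) → (f w).1 ⊆ E := by
  obtain ⟨Q, _, _, _, ψ, q0, F, hfψ⟩ := hf
  refine ⟨insert 0 (insert 1 (s.biUnion (fun a => Finset.univ.biUnion fun p : Q × Q =>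
    (ψ p.1 a p.2).1) ∪ Finset.univ.biUnion fun q => (F q).1)), fun w hw => ?_⟩
  rw [hfψ]
  refine nthfaLang_subset (by simp) (by simp) (fun a ha q q' x hx => ?_) (fun q x hx => ?_)
  · simp only [Finset.mem_insert, Finset.mem_union, Finset.mem_biUnion]
    exact Or.inr (Or.inr (Or.inl ⟨a, hw a ha, (q, q'), Finset.mem_univ _, hx⟩))
  · simp only [Finset.mem_insert, Finset.mem_union, Finset.mem_biUnion]
    exact Or.inr (Or.inr (Or.inr ⟨q, Finset.mem_univ _, hx⟩))

lemma elt_injective : Function.Injective elt := by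
  intro i j h
  have h' : (1 : ℝ) / (2 ^ i + 1) = 1 / (2 ^ j + 1) := congrArg Subtype.val h
  field_simp at h'
  exact pow_right_injective₀ (by norm_num : (0 : ℝ) < 2) (by norm_num) (by linarith)

lemma elt_mem_fWitness {α : Type} {w : List α} {n : ℕ} (hn : n ≤ w.length) :
    elt n ∈ (fWitness w).1 :=
  Finset.mem_image_of_mem elt (Finset.mem_range_succ_iff.mpr hn)

lemma not_inTR_fWitness {α : Type} [Nonempty α] : ¬ InTR (fWitness (α := α)) := by
  intro hf
  obtain ⟨a⟩ := ‹Nonempty α›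
  obtain ⟨E, hE⟩ := hf.exists_finset_subset {a}
  have hmem : ∀ n, elt n ∈ E := fun n =>
    hE (List.replicate n a) (fun b hb => by simp [List.eq_of_mem_replicate hb])
      (elt_mem_fWitness (List.length_replicate ..).ge)
  exact Set.infinite_range_of_injective elt_injective
    (E.finite_toSet.subset (Set.range_subset_iff.mpr hmem))

/-- There is a THFL not computed by any NTHFA; in particular the THFL
f(w) = ⋃_{i=0}^{|w|} {1/(2^i+1)} is not in 𝕋_R. -/
theorem stmt15 {α : Type} [Nonempty α] :
    ¬ InTR (fWitness (α := α)) ∧ ∃ f : List α → TH, ¬ InTR f :=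
  ⟨not_inTR_fWitness, fWitness, not_inTR_fWitness⟩
end

section
/- For every crisp nondeterministic typical hesitant fuzzy automaton N there exists a crisp deterministic typical hesitant fuzzy automaton D (with state set 2^Q) such that f_D = f_N; in particular nondeterminism does not increase the computational power. -/
open unitInterval

/-- Extension of a crisp nondeterministic transition function to words. -/
noncomputable def deltaHat {Q α : Type} [DecidableEq Q] (δ : Q → α → Finset Q) :
    Finset Q → List α → Finset Q
  | S, [] => S
  | S, a :: w => deltaHat δ (S.biUnion fun q => δ q a) w

/-- The THFL computed by the CNTHFA ⟨Q, α, δ, q₀, F⟩: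
f(w) = ⊔_{q ∈ δ̂(q₀, w)} F(q)  (with value {0} when the reachable set is empty). -/
noncomputable def cnthfaLang {Q α : Type} [Fintype Q] [DecidableEq Q]
    (δ : Q → α → Finset Q) (q0 : Q) (F : Q → TH) (w : List α) : TH :=
  bigHsup (deltaHat δ {q0} w) F

/-- For every CNTHFA there is a crisp *deterministic* THFA, with state set 2^Q,
computing the same THFL: f(w) = F'(δ̂'(q₀', w)) where δ' is total. -/
theorem stmt18 {Q α : Type} [Fintype Q] [DecidableEq Q] [Nonempty Q]
    (δ : Q → α → Finset Q) (q0 : Q) (F : Q → TH) :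
    ∃ (δD : Finset Q → α → Finset Q) (q0D : Finset Q) (FD : Finset Q → TH),
      ∀ w : List α, FD (List.foldl δD q0D w) = cnthfaLang δ q0 F w := by
  refine ⟨fun S a => S.biUnion fun q => δ q a, {q0}, fun S => bigHsup S F, fun w => ?_⟩
  have h : ∀ (w : List α) (S : Finset Q),
      List.foldl (fun S a => S.biUnion fun q => δ q a) S w = deltaHat δ S w := by
    intro w
    induction w with
    | nil => intro S; rfl
    | cons a w ih => intro S; simp [deltaHat, ih]
  rw [cnthfaLang, h]
end

section
/- If f₁ and f₂ are typical hesitant fuzzy languages over the same alphabet each computed by a crisp deterministic typical hesitant fuzzy automaton, then their ℍ-intersection (f₁ ⋒ f₂)(w) = f₁(w) ⊗ f₂(w) is computed by a crisp deterministic typical hesitant fuzzy automaton (the product automaton). -/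
open unitInterval

/-- If f₁, f₂ (over the same alphabet) are each computed by a crisp deterministic
typical hesitant fuzzy automaton (total transition function δ, extended to words
by folding, with f_D(w) = F(δ̂(q₀, w))), then their ℍ-intersection
(f₁ ⋒ f₂)(w) = f₁(w) ⊗ f₂(w) is computed by a crisp deterministic THFA. -/
theorem stmt19 {α : Type} {Q1 Q2 : Type} [Fintype Q1] [Fintype Q2]
    [Nonempty Q1] [Nonempty Q2]
    (δ1 : Q1 → α → Q1) (q1 : Q1) (F1 : Q1 → TH)
    (δ2 : Q2 → α → Q2) (q2 : Q2) (F2 : Q2 → TH) :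
    ∃ (Q : Type) (_ : Fintype Q) (_ : Nonempty Q)
      (δ : Q → α → Q) (q0 : Q) (F : Q → TH),
      ∀ w : List α,
        F (List.foldl δ q0 w) =
          hinf (F1 (List.foldl δ1 q1 w)) (F2 (List.foldl δ2 q2 w)) := by
  refine ⟨Q1 × Q2, inferInstance, inferInstance,
    fun p a => (δ1 p.1 a, δ2 p.2 a), (q1, q2),
    fun p => hinf (F1 p.1) (F2 p.2), fun w => ?_⟩
  suffices h : ∀ (w : List α) (p : Q1 × Q2),
      List.foldl (fun p a => (δ1 p.1 a, δ2 p.2 a)) p w =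
        (List.foldl δ1 p.1 w, List.foldl δ2 p.2 w) by
    rw [h w (q1, q2)]
  intro w
  induction w with
  | nil => intro p; rfl
  | cons a t ih => intro p; simp [List.foldl_cons, ih]
end
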